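/- arXiv:2304.02337 — 2 statements merged into one kernel-verified Lean document; each statement's English description precedes it below -/
import Mathlib

section
/- Let α, β ∈ 𝔽_q^* and let r, s be positive integers. Then for every integer d ≥ 0, S_d(α; r)·S_d(β; s) = S_d(αβ; r+s) + Σ_{i+j=r+s, i,j≥1} Δ^j_{r,s}·S_d(αβ, 1; i, j), where the coefficients Δ^j_{r,s} ∈ 𝔽_q are viewed inside K_∞. -/
open scoped BigOperators TensorProduct

noncomputable section

/-- A letter `x_{n,ε}` of the alphabet `Γ`: a positive integer weight and a
character `ε ∈ 𝔽_q^*`. -/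
abbrev Letter (F : Type) [Field F] := ℕ+ × Fˣ

/-- A word over the alphabet `Γ`. -/
abbrev Word (F : Type) [Field F] := List (Letter F)

/-- `𝔇`: the free `𝔽_q`-vector space on the words over `Γ`. -/
abbrev Dalg (F : Type) [Field F] := Word F →₀ F

variable {F : Type} [Field F] [Fintype F]

/-- The word `w`, viewed as a basis element of `𝔇`. -/
def wd (w : Word F) : Dalg F := Finsupp.single w 1

/-- Concatenation of the letter `x` on the left, as a linear map on `𝔇`. -/
def consL (x : Letter F) : Dalg F →ₗ[F] Dalg F :=
  Finsupp.lmapDomain F F (fun w => x :: w)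

/-- The coefficients `Δ^j_{a,b} ∈ 𝔽_q`. -/
def deltaCoeff (F : Type) [Field F] [Fintype F] (a b j : ℕ) : F :=
  if (Fintype.card F - 1) ∣ j then
    ((((-1) ^ (a - 1) * (Nat.choose (j - 1) (a - 1)) +
        (-1) ^ (b - 1) * (Nat.choose (j - 1) (b - 1)) : ℤ)) : F)
  else 0

/-- The data of the diamond product `⋄` and the shuffle product `⧢` on `𝔇`,
as `𝔽_q`-bilinear maps satisfying the defining recursive equations. -/
structure ShuffleData (F : Type) [Field F] [Fintype F] where
  dia : Dalg F →ₗ[F] Dalg F →ₗ[F] Dalg F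
  sh : Dalg F →ₗ[F] Dalg F →ₗ[F] Dalg F
  dia_nil_left : ∀ v : Dalg F, dia (wd []) v = v
  dia_nil_right : ∀ v : Dalg F, dia v (wd []) = v
  sh_nil_left : ∀ v : Dalg F, sh (wd []) v = v
  sh_nil_right : ∀ v : Dalg F, sh v (wd []) = v
  dia_cons : ∀ (a b : ℕ+) (α β : Fˣ) (u v : Word F),
    dia (wd ((a, α) :: u)) (wd ((b, β) :: v)) =
      consL (a + b, α * β) (sh (wd u) (wd v)) +
      ∑ j ∈ (Finset.Ico 1 ((a : ℕ) + (b : ℕ))).attach,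
        deltaCoeff F a b j.1 •
          consL (⟨(a : ℕ) + (b : ℕ) - j.1, by
              have := Finset.mem_Ico.mp j.2; omega⟩, α * β)
            (sh (wd [(⟨j.1, by have := Finset.mem_Ico.mp j.2; omega⟩, 1)])
              (sh (wd u) (wd v)))
  sh_cons : ∀ (a b : ℕ+) (α β : Fˣ) (u v : Word F),
    sh (wd ((a, α) :: u)) (wd ((b, β) :: v)) =
      consL (a, α) (sh (wd u) (wd ((b, β) :: v))) +
      consL (b, β) (sh (wd ((a, α) :: u)) (wd v)) +
      dia (wd ((a, α) :: u)) (wd ((b, β) :: v))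

/-- The horizontal map `φ_ε`. -/
def horiz (ε : Fˣ) : Dalg F →ₗ[F] Dalg F :=
  Finsupp.lmapDomain F F (fun w => match w with
    | [] => []
    | (u, δ) :: rest => (u, ε * δ) :: rest)

/-- The triangle product `▷` with a word as first argument. -/
def triW (S : ShuffleData F) : Word F → Dalg F → Dalg F
  | [], b => b
  | x :: u, b => consL x (S.sh (wd u) b)

/-- The triangle product `▷` on `𝔇` (the bilinear extension of `triW`). -/
def tri (S : ShuffleData F) (a b : Dalg F) : Dalg F :=
  a.sum fun w c => c • triW S w b


abbrev Kinf (F : Type) [Field F] := LaurentSeries F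

/-- The embedding `A = 𝔽_q[θ] → K_∞`, sending `θ` to `t⁻¹`. -/
def polyToK (F : Type) [Field F] : Polynomial F →+* Kinf F :=
  Polynomial.eval₂RingHom HahnSeries.C (HahnSeries.single (-1) 1)

/-- The monic polynomial of degree `d` with lower-order coefficients `c`. -/
def monicPoly (F : Type) [Field F] (d : ℕ) (c : Fin d → F) : Polynomial F :=
  Polynomial.X ^ d + ∑ i : Fin d, Polynomial.C (c i) * Polynomial.X ^ (i : ℕ)

/-- The depth-one power sum `S_d(ε; s) = Σ_{a ∈ A_+, deg a = d} ε^{deg a}/a^s ∈ K_∞`. -/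
def singleSum (F : Type) [Field F] [Fintype F] (ε : Fˣ) (s : ℕ) (d : ℕ) : Kinf F :=
  ∑ c : Fin d → F, ((ε : F) ^ d) • ((polyToK F (monicPoly F d c)) ^ s)⁻¹

/-- `S_{<d}` attached to a word, for `d ∈ ℕ`. -/
def SLtW (F : Type) [Field F] [Fintype F] : Word F → ℕ → Kinf F
  | [], _ => 1
  | (s, ε) :: rest, d => ∑ e ∈ Finset.range d, singleSum F ε (s : ℕ) e * SLtW F rest e

/-- `S_d` attached to a (nonempty) word. -/
def SDW (F : Type) [Field F] [Fintype F] : Word F → ℕ → Kinf F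
  | [], d => if d = 0 then 1 else 0
  | (s, ε) :: rest, d => singleSum F ε (s : ℕ) d * SLtW F rest d

/-- `S_{<d}` attached to a word, for `d ∈ ℤ`. -/
def SLtWZ (F : Type) [Field F] [Fintype F] : Word F → ℤ → Kinf F
  | [], _ => 1
  | w@(_ :: _), d => SLtW F w d.toNat

/-- The `𝔽_q`-linear map `S_{<d} : 𝔇 → K_∞`. -/
def SLtMap (F : Type) [Field F] [Fintype F] (d : ℤ) (v : Dalg F) : Kinf F :=
  v.sum fun w c => c • SLtWZ F w d

/-- The AMZV attached to a word: `ζ_A = Σ_{d ≥ 0} S_d ∈ K_∞`. -/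
def zetaW (F : Type) [Field F] [Fintype F] : Word F → Kinf F
  | [] => 1
  | w@(_ :: _) => ∑' d : ℕ, SDW F w d

/-- The `𝔽_q`-linear map `ζ_A : 𝔇 → K_∞`. -/
def zetaMap (F : Type) [Field F] [Fintype F] (v : Dalg F) : Kinf F :=
  v.sum fun w c => c • zetaW F w

end

/-!
Expanding the product gives a double sum of `a⁻ʳ b⁻ˢ` over monic `a, b` of degree `d`. The
diagonal `a = b` gives `S_d(r + s)`. Off the diagonal, partial fractions write `a⁻ʳ b⁻ˢ` as an
integer combination of the `a^{-(r+s-j)} (a - b)^{-j}` and of the same terms with `a, b` swapped.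
For fixed `a`, the differences `a - b` run over the nonzero polynomials of degree `< d`, i.e. over
`u m` with `u ∈ 𝔽_q^×` and `m` monic of degree `< d`, and `∑_u u^{-j}` is `-1` or `0` according
as `q - 1 ∣ j`. This yields the coefficients `Δ^j_{r,s}` and the factor `S_{<d}(1; j)`; the
twists factor out as `(αβ)^d`. The computation works in any field receiving `𝔽_q[θ]` injectively.
-/

open Finset

section PartialFraction

variable {R : Type*} [CommRing R]

def partialFractionPart (a w : R) (r s : ℕ) : R :=
  ∑ k ∈ range r, (-1) ^ s * (s.multichoose k : R) * a ^ (r - k) * w ^ (s + k)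

@[simp]
lemma partialFractionPart_zero_left (a w : R) (s : ℕ) : partialFractionPart a w 0 s = 0 := by
  simp [partialFractionPart]

lemma partialFractionPart_zero_right (a w : R) {r : ℕ} (hr : r ≠ 0) :
    partialFractionPart a w r 0 = a ^ r := by
  obtain ⟨r, rfl⟩ := Nat.exists_eq_succ_of_ne_zero hr
  simp [partialFractionPart, sum_range_succ']

lemma partialFractionPart_succ_succ (a w : R) (r s : ℕ) :
    partialFractionPart a w (r + 1) (s + 1) =
      w * (partialFractionPart a w r (s + 1) - partialFractionPart a w (r + 1) s) := by
  simp only [partialFractionPart, sum_range_succ' _ r, Nat.multichoose_succ_succ,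
    Nat.multichoose_zero_right, mul_sub, mul_add, mul_sum, Nat.add_sub_add_right]
  rw [sub_add_eq_sub_sub, ← sum_sub_distrib, sub_eq_add_neg]
  congr 1
  · refine sum_congr rfl fun k _ => ?_
    push_cast
    ring
  · ring

/-- The partial fraction expansion of `x⁻ʳ y⁻ˢ`, written for `a = x⁻¹`, `b = y⁻¹`,
`w = (x - y)⁻¹`. -/
theorem pow_mul_pow_eq_partialFractionPart {a b w : R} (h : a * b = w * (b - a)) {r s : ℕ}
    (hrs : r + s ≠ 0) :
    a ^ r * b ^ s = partialFractionPart a w r s + partialFractionPart b (-w) s r := by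
  induction r generalizing s with
  | zero => simp [partialFractionPart_zero_right b (-w) (by simpa using hrs)]
  | succ r ihr =>
    induction s with
    | zero => simp [partialFractionPart_zero_right a w (Nat.succ_ne_zero r)]
    | succ s ihs =>
      have hstep :
          a ^ (r + 1) * b ^ (s + 1) = w * (a ^ r * b ^ (s + 1) - a ^ (r + 1) * b ^ s) := by
        linear_combination a ^ r * b ^ s * h
      rw [hstep, ihr (by omega), ihs (by omega), partialFractionPart_succ_succ,
        partialFractionPart_succ_succ]
      ring

lemma partialFractionPart_eq_sum_Ico (a w : R) (r : ℕ) {s : ℕ} (hs : s ≠ 0) :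
    partialFractionPart a w r s =
      ∑ j ∈ Ico 1 (r + s),
        ((-1) ^ s * ((j - 1).choose (s - 1) : ℤ)) • (a ^ (r + s - j) * w ^ j) := by
  have hvanish : ∀ j ∈ Ico 1 (r + s), j ∉ Ico s (r + s) →
      ((-1) ^ s * ((j - 1).choose (s - 1) : ℤ)) • (a ^ (r + s - j) * w ^ j) = 0 := by
    intro j hj hjs
    rw [Nat.choose_eq_zero_of_lt (by simp only [mem_Ico] at hj hjs; omega)]
    simp
  rw [← sum_subset (Ico_subset_Ico_left (Nat.one_le_iff_ne_zero.mpr hs)) hvanish,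
    sum_Ico_eq_sum_range, partialFractionPart, Nat.add_sub_cancel]
  refine sum_congr rfl fun k _ => ?_
  rw [Nat.multichoose_eq, Nat.choose_symm_of_eq_add (by omega : s + k - 1 = s - 1 + k),
    show r + s - (s + k) = r - k by omega, show s + k - 1 = s - 1 + k by omega, zsmul_eq_mul]
  push_cast
  ring

lemma inv_pow_mul_inv_pow_eq_partialFractionPart {K : Type*} [Field K] {x y : K} (hx : x ≠ 0)
    (hy : y ≠ 0) (hxy : x ≠ y) {r s : ℕ} (hrs : r + s ≠ 0) :
    (x ^ r)⁻¹ * (y ^ s)⁻¹ =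
      partialFractionPart x⁻¹ (x - y)⁻¹ r s + partialFractionPart y⁻¹ (y - x)⁻¹ s r := by
  have hxy' : x - y ≠ 0 := sub_ne_zero.mpr hxy
  rw [← inv_pow, ← inv_pow, ← neg_sub x y, inv_neg]
  refine pow_mul_pow_eq_partialFractionPart ?_ hrs
  field_simp

end PartialFraction

section FiniteField

open Polynomial

variable {F : Type} [Field F] [DecidableEq F]

lemma monicPoly_eq_X_pow_add_ofFn (d : ℕ) (c : Fin d → F) :
    monicPoly F d c = X ^ d + ofFn d c := by
  simp [monicPoly, ofFn_eq_sum_monomial, C_mul_X_pow_eq_monomial]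

lemma monicPoly_monic (d : ℕ) (c : Fin d → F) : (monicPoly F d c).Monic := by
  rw [monicPoly_eq_X_pow_add_ofFn]
  exact monic_X_pow_add (ofFn_degree_lt c)

lemma monicPoly_sub_monicPoly (d : ℕ) (c c' : Fin d → F) :
    monicPoly F d c - monicPoly F d c' = ofFn d (c - c') := by
  simp [monicPoly_eq_X_pow_add_ofFn, map_sub]

lemma monicPoly_injective (d : ℕ) : Function.Injective (monicPoly F d) := by
  intro c c' h
  rw [← sub_eq_zero]
  apply injective_ofFn d
  rw [← monicPoly_sub_monicPoly, h, sub_self, map_zero]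

lemma ofFn_snoc (d : ℕ) (c : Fin d → F) (t : F) :
    ofFn (d + 1) (Fin.snoc c t : Fin (d + 1) → F) = ofFn d c + C t * X ^ d := by
  simp [ofFn_eq_sum_monomial, Fin.sum_univ_castSucc, C_mul_X_pow_eq_monomial]

lemma ofFn_smul_add_C_mul_X_pow (d : ℕ) (c : Fin d → F) (t : F) :
    ofFn d (t • c) + C t * X ^ d = C t * monicPoly F d c := by
  rw [map_smul, smul_eq_C_mul, monicPoly_eq_X_pow_add_ofFn]
  ring

/-- Every polynomial of degree `< d` is `0` or `u m` with `u` a unit and `m` monic of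
degree `< d`. -/
lemma sum_ofFn [Fintype F] {M : Type*} [AddCommMonoid M] (g : F[X] → M) (d : ℕ) :
    ∑ e : Fin d → F, g (ofFn d e) =
      g 0 + ∑ i ∈ range d, ∑ u : Fˣ, ∑ c : Fin i → F, g (C (u : F) * monicPoly F i c) := by
  induction d with
  | zero => simp
  | succ d ih =>
    have hunit (u : Fˣ) : ∑ c : Fin d → F, g (ofFn d c + C (u : F) * X ^ d) =
        ∑ c : Fin d → F, g (C (u : F) * monicPoly F d c) := by
      rw [← Equiv.sum_comp (MulAction.toPerm u)]
      exact sum_congr rfl fun c _ => congrArg g (ofFn_smul_add_C_mul_X_pow d c u)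
    have hsnoc (p : F × (Fin d → F)) : (Fin.snocEquiv fun _ => F) p = Fin.snoc p.2 p.1 := rfl
    rw [← Equiv.sum_comp (Fin.snocEquiv fun _ => F), Fintype.sum_prod_type,
      Fintype.sum_eq_add_sum_subtype_ne _ 0, ← Equiv.sum_comp (unitsEquivNeZero (G₀ := F))]
    simp only [hsnoc, ofFn_snoc, map_zero, zero_mul, add_zero, ih, unitsEquivNeZero_apply_coe,
      hunit, sum_range_succ]
    abel

end FiniteField

section PowerSums

open Polynomial

variable {F : Type} [Field F] {K : Type*} [Field K] [Algebra F K] (φ : F[X] →ₐ[F] K)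

lemma inv_pow_map_C_mul (t : F) (p : F[X]) (j : ℕ) :
    (φ (C t * p) ^ j)⁻¹ = (t ^ j)⁻¹ • (φ p ^ j)⁻¹ := by
  rw [← smul_eq_C_mul, map_smul, _root_.smul_pow, smul_inv₀]

variable [Fintype F]

noncomputable def monicPowSum (d j : ℕ) : K :=
  ∑ c : Fin d → F, (φ (monicPoly F d c) ^ j)⁻¹

noncomputable def monicPowSumLT (d j : ℕ) : K :=
  ∑ i ∈ range d, monicPowSum φ i j

lemma deltaCoeff_eq_zsmul {r s : ℕ} (hr : r ≠ 0) (hs : s ≠ 0) (j : ℕ) :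
    deltaCoeff F r s j =
      ((-1) ^ s * ((j - 1).choose (s - 1) : ℤ) + (-1) ^ r * ((j - 1).choose (r - 1) : ℤ)) •
        (if Fintype.card F - 1 ∣ j then -1 else 0 : F) := by
  obtain ⟨r, rfl⟩ := Nat.exists_eq_succ_of_ne_zero hr
  obtain ⟨s, rfl⟩ := Nat.exists_eq_succ_of_ne_zero hs
  unfold deltaCoeff
  split_ifs
  · simp only [Nat.succ_sub_one, zsmul_eq_mul, pow_succ]
    push_cast
    ring
  · simp

variable [DecidableEq F]

lemma sum_units_inv_pow (j : ℕ) :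
    ∑ u : Fˣ, ((u : F) ^ j)⁻¹ = if Fintype.card F - 1 ∣ j then -1 else 0 := by
  rw [← FiniteField.sum_pow_units, ← Equiv.sum_comp (Equiv.inv Fˣ)]
  simp

lemma sum_erase_inv_pow_sub (d j : ℕ) (c : Fin d → F) :
    ∑ c' ∈ univ.erase c, ((φ (monicPoly F d c) - φ (monicPoly F d c')) ^ j)⁻¹ =
      (if Fintype.card F - 1 ∣ j then -1 else 0 : F) • monicPowSumLT φ d j := by
  set g : F[X] → K := fun p => (φ p ^ j)⁻¹
  have hsub (c' : Fin d → F) :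
      ((φ (monicPoly F d c) - φ (monicPoly F d c')) ^ j)⁻¹ = g (ofFn d (c - c')) := by
    rw [← map_sub, monicPoly_sub_monicPoly]
  simp only [hsub]
  rw [sum_erase_eq_sub (mem_univ c), sub_self,
    Fintype.sum_equiv (Equiv.subLeft c) (fun c' => g (ofFn d (c - c'))) (fun e => g (ofFn d e))
      fun _ => rfl,
    sum_ofFn, map_zero, add_sub_cancel_left, monicPowSumLT, smul_sum, ← sum_units_inv_pow]
  refine sum_congr rfl fun i _ => ?_
  simp only [g, inv_pow_map_C_mul, monicPowSum, sum_smul, smul_sum]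
  rw [Finset.sum_comm]

lemma sum_sum_erase_partialFractionPart (d r : ℕ) {s : ℕ} (hs : s ≠ 0) :
    ∑ c : Fin d → F, ∑ c' ∈ univ.erase c,
        partialFractionPart (φ (monicPoly F d c))⁻¹
          (φ (monicPoly F d c) - φ (monicPoly F d c'))⁻¹ r s =
      ∑ j ∈ Ico 1 (r + s), ((-1) ^ s * ((j - 1).choose (s - 1) : ℤ)) •
        (if Fintype.card F - 1 ∣ j then -1 else 0 : F) •
          (monicPowSum φ d (r + s - j) * monicPowSumLT φ d j) := by
  simp only [partialFractionPart_eq_sum_Ico _ _ r hs, inv_pow]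
  rw [sum_congr rfl fun c _ => Finset.sum_comm, Finset.sum_comm]
  refine sum_congr rfl fun j _ => ?_
  simp only [← smul_sum, ← mul_sum, sum_erase_inv_pow_sub, mul_smul_comm, ← sum_mul, monicPowSum]

theorem monicPowSum_mul_monicPowSum (hφ : Function.Injective φ) (d : ℕ) {r s : ℕ} (hr : r ≠ 0)
    (hs : s ≠ 0) :
    monicPowSum φ d r * monicPowSum φ d s =
      monicPowSum φ d (r + s) + ∑ j ∈ Ico 1 (r + s),
        deltaCoeff F r s j • (monicPowSum φ d (r + s - j) * monicPowSumLT φ d j) := by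
  set x : (Fin d → F) → K := fun c => φ (monicPoly F d c)
  have hx (c : Fin d → F) : x c ≠ 0 := (map_ne_zero_iff φ hφ).mpr (monicPoly_monic d c).ne_zero
  have hpf (c : Fin d → F) : ∀ c' ∈ univ.erase c, (x c ^ r)⁻¹ * (x c' ^ s)⁻¹ =
      partialFractionPart (x c)⁻¹ (x c - x c')⁻¹ r s +
        partialFractionPart (x c')⁻¹ (x c' - x c)⁻¹ s r := fun c' hc' =>
    inv_pow_mul_inv_pow_eq_partialFractionPart (hx c) (hx c')
      (hφ.ne ((monicPoly_injective d).ne (ne_of_mem_erase hc').symm)) (by omega)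
  have hswap : ∑ c, ∑ c' ∈ univ.erase c, partialFractionPart (x c')⁻¹ (x c' - x c)⁻¹ s r =
      ∑ c, ∑ c' ∈ univ.erase c, partialFractionPart (x c)⁻¹ (x c - x c')⁻¹ s r :=
    Finset.sum_comm' fun c c' => by simp [and_comm, ne_comm]
  calc monicPowSum φ d r * monicPowSum φ d s
      = ∑ c, ((x c ^ (r + s))⁻¹ + ∑ c' ∈ univ.erase c, (x c ^ r)⁻¹ * (x c' ^ s)⁻¹) := by
        rw [monicPowSum, monicPowSum, sum_mul_sum]
        refine sum_congr rfl fun c _ => ?_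
        rw [← add_sum_erase _ _ (mem_univ c), pow_add, mul_inv]
    _ = monicPowSum φ d (r + s) +
          (∑ c, ∑ c' ∈ univ.erase c, partialFractionPart (x c)⁻¹ (x c - x c')⁻¹ r s +
            ∑ c, ∑ c' ∈ univ.erase c, partialFractionPart (x c)⁻¹ (x c - x c')⁻¹ s r) := by
        rw [sum_add_distrib, ← hswap, ← sum_add_distrib]
        simp only [sum_congr rfl (hpf _), sum_add_distrib]
        rfl
    _ = _ := by
        rw [sum_sum_erase_partialFractionPart φ d r hs, sum_sum_erase_partialFractionPart φ d s hr,
          add_comm s r, ← sum_add_distrib]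
        simp only [← add_smul, ← smul_assoc, deltaCoeff_eq_zsmul hr hs]

end PowerSums

section LaurentSeries

open Polynomial

variable {F : Type} [Field F]

lemma algebraMap_Kinf_apply (t : F) : algebraMap F (Kinf F) t = HahnSeries.C t := by
  simp [HahnSeries.algebraMap_apply']

noncomputable def polyToKAlgHom : F[X] →ₐ[F] Kinf F :=
  { polyToK F with commutes' := fun t => by simp [polyToK, algebraMap_Kinf_apply] }

lemma polyToK_coeff_neg (p : F[X]) (n : ℕ) : (polyToK F p).coeff (-n) = p.coeff n := by
  induction p using Polynomial.induction_on' with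
  | add p q hp hq => simp [hp, hq]
  | monomial k a =>
    simp [polyToK, HahnSeries.single_pow, HahnSeries.coeff_single, coeff_monomial, eq_comm]

lemma polyToK_injective : Function.Injective (polyToK F) := fun p q h =>
  Polynomial.ext fun n => by rw [← polyToK_coeff_neg, h, polyToK_coeff_neg]

variable [Fintype F]

lemma singleSum_eq_C_mul_monicPowSum (ε : Fˣ) (s d : ℕ) :
    singleSum F ε s d = HahnSeries.C ((ε : F) ^ d) * monicPowSum polyToKAlgHom d s := by
  rw [singleSum, monicPowSum, mul_sum]
  exact sum_congr rfl fun _ _ => HahnSeries.C_mul_eq_smul.symm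

lemma SDW_singleton (s : ℕ+) (ε : Fˣ) (d : ℕ) :
    SDW F [(s, ε)] d = HahnSeries.C ((ε : F) ^ d) * monicPowSum polyToKAlgHom d s := by
  rw [SDW, SLtW, mul_one, singleSum_eq_C_mul_monicPowSum]

lemma SDW_pair_one {m n : ℕ} (hm : 0 < m) (hn : 0 < n) (ε : Fˣ) (d : ℕ) :
    SDW F [(⟨m, hm⟩, ε), (⟨n, hn⟩, 1)] d = HahnSeries.C ((ε : F) ^ d) *
      (monicPowSum polyToKAlgHom d m * monicPowSumLT polyToKAlgHom d n) := by
  simp only [SDW, SLtW, mul_one, singleSum_eq_C_mul_monicPowSum, Units.val_one, one_pow, map_one,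
    one_mul, PNat.mk_coe, monicPowSumLT, mul_assoc]

end LaurentSeries

/-- Chen's formula for twisted power sums (Lemma `VMPLdepth1`). -/
theorem power_sum_depth_one_product (F : Type) [Field F] [Fintype F]
    (α β : Fˣ) (r s : ℕ+) (d : ℕ) :
    SDW F [(r, α)] d * SDW F [(s, β)] d =
      SDW F [(r + s, α * β)] d +
      ∑ j ∈ (Finset.Ico 1 ((r : ℕ) + (s : ℕ))).attach,
        deltaCoeff F r s j.1 •
          SDW F [(⟨(r : ℕ) + (s : ℕ) - j.1, by
              have := Finset.mem_Ico.mp j.2; omega⟩, α * β),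
            (⟨j.1, by have := Finset.mem_Ico.mp j.2; omega⟩, 1)] d := by
  classical
  have key := monicPowSum_mul_monicPowSum (polyToKAlgHom (F := F)) polyToK_injective d
    r.ne_zero s.ne_zero
  -- The `F`-action on `Kinf F` used in the definitions is not syntactically the one of its
  -- `F`-algebra structure, so both are turned into multiplication by `HahnSeries.C`.
  simp only [Algebra.smul_def, algebraMap_Kinf_apply] at key
  simp only [SDW_pair_one, SDW_singleton, PNat.add_coe, ← HahnSeries.C_mul_eq_smul]
  rw [sum_attach (Ico 1 ((r : ℕ) + s)) fun j => HahnSeries.C (deltaCoeff F r s j) *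
      (HahnSeries.C (((α * β : Fˣ) : F) ^ d) *
        (monicPowSum polyToKAlgHom d (r + s - j) * monicPowSumLT polyToKAlgHom d j)),
    mul_mul_mul_comm, ← map_mul, key, mul_add, mul_sum, Units.val_mul, mul_pow]
  congr 1
  exact sum_congr rfl fun j _ => mul_left_comm _ _ _
end

section
/- For every ε ∈ 𝔽_q^* and every nonempty word 𝔲 over Γ, Δ(φ_ε(𝔲)) = (φ_ε ⊗ id)(Δ(𝔲)) + (id ⊗ φ_ε − φ_ε ⊗ id)(1 ⊗ 𝔲). -/
/-!
`φ_ε` only changes the character of the first letter of a word. In the reduced coproduct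
`Δ(𝔲) - 1 ⊗ 𝔲` every left tensor factor starts with the first letter of `𝔲`, with its
character: for a letter this is read off the defining formula, and for longer words the
recursion multiplies the reduced coproduct of the first letter by concatenation on the left,
which commutes with `φ_ε ⊗ id`. So `φ_ε ⊗ id` carries the reduced coproduct of `𝔲` to that of
`φ_ε(𝔲)`, and the claim is this identity rearranged.
-/

open scoped BigOperators TensorProduct

noncomputable section

variable {F : Type} [Field F] [Fintype F]

/-- The concatenation product on `𝔇`, as a bilinear map. -/
def concatL (F : Type) [Field F] [Fintype F] : Dalg F →ₗ[F] Dalg F →ₗ[F] Dalg F :=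
  Finsupp.lsum F fun w =>
    LinearMap.toSpanSingleton F _
      (Finsupp.lsum F fun w' => LinearMap.toSpanSingleton F (Dalg F) (wd (w ++ w')))

/-- The product on `𝔇 ⊗ 𝔇` given by concatenation in the first component and
shuffle in the second: `(a ⊗ b)·(c ⊗ d) = (a·c) ⊗ (b ⧢ d)`. -/
def tensorMul (S : ShuffleData F) :
    TensorProduct F (Dalg F) (Dalg F) →ₗ[F]
      TensorProduct F (Dalg F) (Dalg F) →ₗ[F] TensorProduct F (Dalg F) (Dalg F) :=
  (TensorProduct.homTensorHomMap (RingHom.id F) (Dalg F) (Dalg F) (Dalg F) (Dalg F)).comp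
    (TensorProduct.map (concatL F) S.sh)

/-- The componentwise shuffle product on `𝔇 ⊗ 𝔇`:
`(a ⊗ b) ⧢ (c ⊗ d) = (a ⧢ c) ⊗ (b ⧢ d)`. -/
def shT (S : ShuffleData F) :
    TensorProduct F (Dalg F) (Dalg F) →ₗ[F]
      TensorProduct F (Dalg F) (Dalg F) →ₗ[F] TensorProduct F (Dalg F) (Dalg F) :=
  (TensorProduct.homTensorHomMap (RingHom.id F) (Dalg F) (Dalg F) (Dalg F) (Dalg F)).comp
    (TensorProduct.map S.sh S.sh)

/-- The bracket `[𝔞]` of a `Σ`-word `𝔞 = x_{i_1} ⋯ x_{i_m}` (a word with all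
characters trivial, recorded by its list of weights). -/
def bracket (S : ShuffleData F) (l : List ℕ+) : Dalg F :=
  (((-1 : F) ^ l.length) *
      (l.map fun i => deltaCoeff F 1 ((l.map fun n => (n : ℕ)).sum + 1) (i : ℕ)).prod) •
    (l.map fun i => wd [(i, (1 : Fˣ))]).foldr (fun x acc => S.sh x acc) (wd ([] : Word F))

/-- The data of the coproduct `Δ : 𝔇 → 𝔇 ⊗ 𝔇`, an `𝔽_q`-linear map satisfying
its defining equations. -/
structure CoprodData (F : Type) [Field F] [Fintype F] (S : ShuffleData F) where
  cop : Dalg F →ₗ[F] TensorProduct F (Dalg F) (Dalg F)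
  cop_nil : cop (wd []) = (wd []) ⊗ₜ[F] (wd [])
  cop_letter : ∀ (n : ℕ+) (ε : Fˣ),
    cop (wd [(n, ε)]) = (wd []) ⊗ₜ[F] (wd [(n, ε)]) +
      ∑ r ∈ (Finset.Icc 1 (n : ℕ)).attach,
        ∑ c : Composition ((n : ℕ) - r.1),
          ((Nat.choose (r.1 + c.blocks.length - 2) c.blocks.length : F)) •
            ((wd [(⟨r.1, by have := Finset.mem_Icc.mp r.2; omega⟩, ε)]) ⊗ₜ[F]
              bracket S (c.blocks.attach.map fun i => (⟨i.1, c.blocks_pos i.2⟩ : ℕ+)))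
  cop_cons : ∀ (x : Letter F) (v : Word F), v ≠ [] →
    cop (wd (x :: v)) = (wd []) ⊗ₜ[F] (wd (x :: v)) +
      tensorMul S (cop (wd [x]) - (wd []) ⊗ₜ[F] (wd [x])) (cop (wd v))

/-- The weight of a word. -/
def wordWeight (w : Word F) : ℕ := (w.map fun x => ((x.1 : ℕ))).sum

/-- The weight-`n` graded piece `𝔇_n` of `𝔇`. -/
def Dw (F : Type) [Field F] [Fintype F] (n : ℕ) : Submodule F (Dalg F) :=
  Submodule.span F (wd '' {w : Word F | wordWeight w = n})

/-- The counit `ε : 𝔇 → 𝔽_q`. -/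
def counitL (F : Type) [Field F] [Fintype F] : Dalg F →ₗ[F] F :=
  Finsupp.lapply ([] : Word F)

end

section Horiz

variable {F : Type} [Field F]

@[simp]
lemma horiz_wd_nil (ε : Fˣ) : horiz ε (wd ([] : Word F)) = wd [] := by
  simp [horiz, wd, Finsupp.mapDomain_single]

@[simp]
lemma horiz_wd_cons (ε : Fˣ) (x : Letter F) (t : Word F) :
    horiz ε (wd (x :: t)) = wd ((x.1, ε * x.2) :: t) := by
  simp [horiz, wd, Finsupp.mapDomain_single]

end Horiz

noncomputable section Coproduct

variable {F : Type} [Field F] [Fintype F]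

lemma concatL_wd (w w' : Word F) : concatL F (wd w) (wd w') = wd (w ++ w') := by
  simp [concatL, wd, LinearMap.toSpanSingleton_apply]

lemma horiz_comp_concatL_wd_cons (ε : Fˣ) (x : Letter F) (t : Word F) :
    (horiz ε).comp (concatL F (wd (x :: t))) = concatL F (wd ((x.1, ε * x.2) :: t)) := by
  refine Finsupp.lhom_ext' fun w' => LinearMap.ext_ring ?_
  change horiz ε (concatL F _ (wd w')) = concatL F _ (wd w')
  rw [concatL_wd, concatL_wd, List.cons_append, List.cons_append, horiz_wd_cons]

lemma tensorMul_tmul (S : ShuffleData F) (s b : Dalg F) (Y : Dalg F ⊗[F] Dalg F) :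
    tensorMul S (s ⊗ₜ[F] b) Y = TensorProduct.map (concatL F s) (S.sh b) Y := by
  simp [tensorMul, TensorProduct.homTensorHomMap_apply]

def consTensors (F : Type) [Field F] : Submodule F (Dalg F ⊗[F] Dalg F) :=
  Submodule.span F {X | ∃ (x : Letter F) (t : Word F) (b : Dalg F), X = wd (x :: t) ⊗ₜ b}

lemma map_horiz_tensorMul_of_mem_consTensors (S : ShuffleData F) (ε : Fˣ)
    {X : Dalg F ⊗[F] Dalg F} (hX : X ∈ consTensors F) (Y : Dalg F ⊗[F] Dalg F) :
    TensorProduct.map (horiz ε) LinearMap.id (tensorMul S X Y) =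
      tensorMul S (TensorProduct.map (horiz ε) LinearMap.id X) Y := by
  refine LinearMap.eqOn_span (f := TensorProduct.map (horiz ε) LinearMap.id ∘ₗ (tensorMul S).flip Y)
    (g := (tensorMul S).flip Y ∘ₗ TensorProduct.map (horiz ε) LinearMap.id) ?_ hX
  rintro _ ⟨x, t, b, rfl⟩
  rw [LinearMap.comp_apply, LinearMap.comp_apply, LinearMap.flip_apply, LinearMap.flip_apply,
    TensorProduct.map_tmul, LinearMap.id_apply, horiz_wd_cons, tensorMul_tmul, tensorMul_tmul,
    ← LinearMap.comp_apply, ← TensorProduct.map_comp, horiz_comp_concatL_wd_cons,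
    LinearMap.id_comp]

def reducedCop {S : ShuffleData F} (C : CoprodData F S) (w : Word F) : Dalg F ⊗[F] Dalg F :=
  C.cop (wd w) - wd [] ⊗ₜ wd w

lemma reducedCop_letter {S : ShuffleData F} (C : CoprodData F S) (n : ℕ+) (δ : Fˣ) :
    reducedCop C [(n, δ)] =
      ∑ r ∈ (Finset.Icc 1 (n : ℕ)).attach,
        ∑ c : Composition ((n : ℕ) - r.1),
          ((Nat.choose (r.1 + c.blocks.length - 2) c.blocks.length : F)) •
            ((wd [(⟨r.1, by have := Finset.mem_Icc.mp r.2; omega⟩, δ)]) ⊗ₜ[F]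
              bracket S (c.blocks.attach.map fun i => (⟨i.1, c.blocks_pos i.2⟩ : ℕ+))) := by
  rw [reducedCop, C.cop_letter]
  exact add_sub_cancel_left (wd ([] : Word F) ⊗ₜ[F] wd [(n, δ)]) _

lemma reducedCop_letter_mem_consTensors {S : ShuffleData F} (C : CoprodData F S)
    (x : Letter F) : reducedCop C [x] ∈ consTensors F := by
  rw [reducedCop_letter]
  refine Submodule.sum_mem _ fun r _ => Submodule.sum_mem _ fun c _ =>
    Submodule.smul_mem _ _ (Submodule.subset_span ⟨_, [], _, rfl⟩)

lemma map_horiz_reducedCop_letter {S : ShuffleData F} (C : CoprodData F S) (ε : Fˣ)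
    (x : Letter F) :
    TensorProduct.map (horiz ε) LinearMap.id (reducedCop C [x]) =
      reducedCop C [(x.1, ε * x.2)] := by
  obtain ⟨n, α⟩ := x
  simp only [reducedCop_letter, map_sum, map_smul, TensorProduct.map_tmul, horiz_wd_cons,
    LinearMap.id_apply]

lemma reducedCop_cons {S : ShuffleData F} (C : CoprodData F S) (x : Letter F) {v : Word F}
    (hv : v ≠ []) : reducedCop C (x :: v) = tensorMul S (reducedCop C [x]) (C.cop (wd v)) := by
  rw [reducedCop, C.cop_cons x v hv, reducedCop]
  exact add_sub_cancel_left (wd ([] : Word F) ⊗ₜ[F] wd (x :: v)) _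

lemma map_horiz_reducedCop_cons {S : ShuffleData F} (C : CoprodData F S) (ε : Fˣ)
    (x : Letter F) (v : Word F) :
    TensorProduct.map (horiz ε) LinearMap.id (reducedCop C (x :: v)) =
      reducedCop C ((x.1, ε * x.2) :: v) := by
  rcases eq_or_ne v [] with rfl | hv
  · exact map_horiz_reducedCop_letter C ε x
  · rw [reducedCop_cons C _ hv, reducedCop_cons C _ hv,
      map_horiz_tensorMul_of_mem_consTensors S ε (reducedCop_letter_mem_consTensors C x),
      map_horiz_reducedCop_letter]

end Coproduct

/-- behavior of the coproduct under horizontal maps: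
`Δ(φ_ε(𝔲)) = (φ_ε ⊗ id)(Δ(𝔲)) + (id ⊗ φ_ε)(1 ⊗ 𝔲) − (φ_ε ⊗ id)(1 ⊗ 𝔲)`. -/
theorem cop_horiz (F : Type) [Field F] [Fintype F] (S : ShuffleData F)
    (C : CoprodData F S) (ε : Fˣ) (u : Word F) (hu : u ≠ []) :
    C.cop (horiz ε (wd u)) =
      TensorProduct.map (horiz ε) (LinearMap.id : Dalg F →ₗ[F] Dalg F) (C.cop (wd u)) +
      TensorProduct.map (LinearMap.id : Dalg F →ₗ[F] Dalg F) (horiz ε)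
        ((wd []) ⊗ₜ[F] (wd u)) -
      TensorProduct.map (horiz ε) (LinearMap.id : Dalg F →ₗ[F] Dalg F)
        ((wd []) ⊗ₜ[F] (wd u)) := by
  obtain ⟨x, v, rfl⟩ := List.exists_cons_of_ne_nil hu
  have h := map_horiz_reducedCop_cons C ε x v
  rw [reducedCop, reducedCop, map_sub, eq_sub_iff_add_eq] at h
  rw [horiz_wd_cons, ← h]
  simp only [TensorProduct.map_tmul, horiz_wd_cons, horiz_wd_nil, LinearMap.id_apply]
  abel
end
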